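/- Assume μ1, μ2, σ1, σ2 > 0 and ρ ∈ (−1,1). Let g(x) := ∫₀^∞ s·f(x·s, s) ds and P(Q1) := ∫₀^∞∫₀^∞ f(s1,s2) ds1 ds2, where f is the bivariate normal density with parameters μ1, μ2, σ1, σ2, ρ. Then the conditional density F(x) := g(x)/P(Q1) of the quotient X1/X2 on the first quadrant satisfies lim_{x → ∞} log F(x) / log x = −2. -/

import Mathlib

open Real MeasureTheory Set

/-- The bivariate normal density with means `μ1, μ2`, standard deviations `σ1, σ2`
and correlation `ρ`. -/
noncomputable def bvnDensity (μ1 μ2 σ1 σ2 ρ : ℝ) (s1 s2 : ℝ) : ℝ :=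
  (2 * π * σ1 * σ2 * Real.sqrt (1 - ρ ^ 2))⁻¹ *
    Real.exp (-(1 / 2) * (((s2 - μ2) / σ2) ^ 2 +
      (s1 - μ1 - ρ * (σ1 / σ2) * (s2 - μ2)) ^ 2 / (σ1 ^ 2 * (1 - ρ ^ 2))))

/-- The complementary error function. -/
noncomputable def erfc (z : ℝ) : ℝ :=
  (2 / Real.sqrt π) * ∫ u in Set.Ioi z, Real.exp (-u ^ 2)

/-- `h(ω) = 1 − √π · ω · exp(ω²) · erfc(ω)`. -/
noncomputable def hfun (ω : ℝ) : ℝ :=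
  1 - Real.sqrt π * ω * Real.exp (ω ^ 2) * erfc ω

/-- The coefficient `A(x)`. -/
noncomputable def coefA (σ1 σ2 ρ : ℝ) (x : ℝ) : ℝ :=
  1 / σ2 ^ 2 + (x - ρ * σ1 / σ2) ^ 2 / (σ1 ^ 2 * (1 - ρ ^ 2))

/-- The coefficient `B(x)`. -/
noncomputable def coefB (μ1 μ2 σ1 σ2 ρ : ℝ) (x : ℝ) : ℝ :=
  -μ2 / σ2 ^ 2 + (x - ρ * σ1 / σ2) * (μ2 * ρ * σ1 / σ2 - μ1) / (σ1 ^ 2 * (1 - ρ ^ 2))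

/-- The constant `C`. -/
noncomputable def coefC (μ1 μ2 σ1 σ2 ρ : ℝ) : ℝ :=
  μ2 ^ 2 / σ2 ^ 2 + (ρ * μ2 / σ2 - μ1 / σ1) ^ 2 / (1 - ρ ^ 2)

/-- `ω(x) = B(x)/√(2A(x))`. -/
noncomputable def omegaFun (μ1 μ2 σ1 σ2 ρ : ℝ) (x : ℝ) : ℝ :=
  coefB μ1 μ2 σ1 σ2 ρ x / Real.sqrt (2 * coefA σ1 σ2 ρ x)

/-- `g(x) = ∫₀^∞ s f(xs, s) ds`, the unnormalized first-quadrant quotient density. -/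
noncomputable def quotDensQ1 (μ1 μ2 σ1 σ2 ρ : ℝ) (x : ℝ) : ℝ :=
  ∫ s in Set.Ioi (0 : ℝ), s * bvnDensity μ1 μ2 σ1 σ2 ρ (x * s) s

/-- `P(Q1) = ∫₀^∞ ∫₀^∞ f(s1, s2) ds1 ds2`. -/
noncomputable def probQ1 (μ1 μ2 σ1 σ2 ρ : ℝ) : ℝ :=
  ∫ s2 in Set.Ioi (0 : ℝ), ∫ s1 in Set.Ioi (0 : ℝ), bvnDensity μ1 μ2 σ1 σ2 ρ s1 s2

/-!
Factor the density as the law of `X2` times the conditional law of `X1` given `X2 = s2`,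
`f(s1, s2) = φ(μ2, σ2²; s2) · φ(μ1 + ρ(σ1/σ2)(s2 - μ2), σ1²(1 - ρ²); s1)`.
Bounding the first factor by its maximum, `s · f(xs, s)` is dominated by a constant times
`s · ψ((x - ρσ1/σ2) s)` for a Gaussian density `ψ`, and the substitution `t = (x - ρσ1/σ2) s`
gives `g(x) = O(x⁻²)`.
Conversely `f ≥ m > 0` on the compact square `[0,1]²`, which contains `(xs, s)` for `s ≤ 1/x`,
so `g(x) ≥ m / (2x²)`. As `P(Q1) > 0`, `log F(x) = -2 log x + O(1)`.
-/

open Filter Topology ProbabilityTheory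
open scoped NNReal

theorem setIntegral_pos_of_forall_pos {X : Type*} [MeasurableSpace X] {μ : Measure X}
    {s : Set X} {f : X → ℝ} (hs : MeasurableSet s) (hμs : μ s ≠ 0) (hf : ∀ x ∈ s, 0 < f x)
    (hfi : IntegrableOn f s μ) : 0 < ∫ x in s, f x ∂μ := by
  rw [setIntegral_pos_iff_support_of_nonneg_ae
    ((ae_restrict_iff' hs).2 (ae_of_all _ fun x hx => (hf x hx).le)) hfi,
    inter_eq_right.2 fun x hx => Function.mem_support.2 (hf x hx).ne']
  exact pos_iff_ne_zero.2 hμs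

theorem integrable_mul_comp_mul_left {φ : ℝ → ℝ} (hφ : Integrable fun t => t * φ t) {y : ℝ}
    (hy : y ≠ 0) : Integrable fun s => s * φ (y * s) := by
  refine ((hφ.comp_mul_left' hy).const_mul y⁻¹).congr (ae_of_all _ fun s => ?_)
  field_simp

theorem integral_Ioi_mul_comp_mul_left (φ : ℝ → ℝ) {y : ℝ} (hy : 0 < y) :
    ∫ s in Ioi (0 : ℝ), s * φ (y * s) = (y ^ 2)⁻¹ * ∫ t in Ioi (0 : ℝ), t * φ t := by
  have h := integral_comp_mul_left_Ioi (fun t => t * φ t) 0 hy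
  rw [mul_zero, smul_eq_mul] at h
  calc ∫ s in Ioi (0 : ℝ), s * φ (y * s) = ∫ s in Ioi (0 : ℝ), y⁻¹ * (y * s * φ (y * s)) := by
        congr 1 with s; field_simp
    _ = _ := by rw [integral_const_mul, h]; ring

theorem gaussianPDFReal_le (μ : ℝ) (v : ℝ≥0) (x : ℝ) :
    gaussianPDFReal μ v x ≤ (√(2 * π * v))⁻¹ := by
  refine mul_le_of_le_one_right (by positivity) (exp_le_one_iff.2 ?_)
  exact div_nonpos_of_nonpos_of_nonneg (neg_nonpos.2 (sq_nonneg _)) (by positivity)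

theorem integrable_mul_gaussianPDFReal (μ : ℝ) (v : ℝ≥0) :
    Integrable fun x => x * gaussianPDFReal μ v x := by
  rcases eq_or_ne v 0 with rfl | hv
  · simp
  have hb : 0 < (2 * (v : ℝ))⁻¹ := by positivity
  have h := (((integrable_mul_exp_neg_mul_sq hb).add
    ((integrable_exp_neg_mul_sq hb).const_mul μ)).comp_sub_right μ).const_mul (√(2 * π * v))⁻¹
  refine h.congr (ae_of_all _ fun x => ?_)
  simp only [Pi.add_apply, gaussianPDFReal]
  rw [show -(x - μ) ^ 2 / (2 * v) = -(2 * (v : ℝ))⁻¹ * (x - μ) ^ 2 by ring]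
  ring

theorem tendsto_log_div_log_of_rpow_bounds {G : ℝ → ℝ} {a c₁ c₂ : ℝ} (hc₁ : 0 < c₁)
    (hlow : ∀ᶠ x in atTop, c₁ * x ^ a ≤ G x) (hup : ∀ᶠ x in atTop, G x ≤ c₂ * x ^ a) :
    Tendsto (fun x => log (G x) / log x) atTop (𝓝 a) := by
  have hlog_rpow : ∀ {c : ℝ}, 0 < c →
      Tendsto (fun x => log (c * x ^ a) / log x) atTop (𝓝 a) := by
    intro c hc
    have h := (tendsto_log_atTop.inv_tendsto_atTop.const_mul (log c)).add_const a
    rw [mul_zero, zero_add] at h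
    refine h.congr' ?_
    filter_upwards [eventually_gt_atTop 1] with x hx
    have hlx : log x ≠ 0 := (log_pos hx).ne'
    rw [Pi.inv_apply, log_mul hc.ne' (rpow_pos_of_pos (by linarith) a).ne', log_rpow (by linarith)]
    field_simp
  obtain ⟨x, ⟨hx0, hxl⟩, hxu⟩ := (((eventually_gt_atTop 0).and hlow).and hup).exists
  have hc₂ : 0 < c₂ := pos_of_mul_pos_left
    ((mul_pos hc₁ (rpow_pos_of_pos hx0 a)).trans_le (hxl.trans hxu)) (rpow_pos_of_pos hx0 a).le
  refine tendsto_of_tendsto_of_tendsto_of_le_of_le' (hlog_rpow hc₁) (hlog_rpow hc₂) ?_ ?_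
  all_goals
    filter_upwards [eventually_gt_atTop 1, hlow, hup] with x hx hl hu
    have hpos : 0 < c₁ * x ^ a := mul_pos hc₁ (rpow_pos_of_pos (by linarith) a)
    refine div_le_div_of_nonneg_right (log_le_log ?_ ?_) (log_pos hx).le
  all_goals linarith

section BivariateNormal

variable {μ1 μ2 σ1 σ2 ρ : ℝ}

theorem continuous_bvnDensity : Continuous (Function.uncurry (bvnDensity μ1 μ2 σ1 σ2 ρ)) := by
  unfold Function.uncurry bvnDensity
  fun_prop

theorem bvnDensity_eq_mul (hσ1 : 0 < σ1) (hσ2 : 0 < σ2) (hρ : ρ ^ 2 < 1) (s1 s2 : ℝ) :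
    bvnDensity μ1 μ2 σ1 σ2 ρ s1 s2 = gaussianPDFReal μ2 (σ2 ^ 2).toNNReal s2 *
      gaussianPDFReal (μ1 + ρ * (σ1 / σ2) * (s2 - μ2)) (σ1 ^ 2 * (1 - ρ ^ 2)).toNNReal s1 := by
  have hρ' : 0 < 1 - ρ ^ 2 := by linarith
  simp only [bvnDensity, gaussianPDFReal, Real.coe_toNNReal _ (sq_nonneg _),
    Real.coe_toNNReal _ (by positivity : 0 ≤ σ1 ^ 2 * (1 - ρ ^ 2))]
  rw [mul_mul_mul_comm, ← exp_add, ← mul_inv, ← Real.sqrt_mul (by positivity),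
    show 2 * π * σ2 ^ 2 * (2 * π * (σ1 ^ 2 * (1 - ρ ^ 2))) = (2 * π * σ1 * σ2) ^ 2 * (1 - ρ ^ 2)
      by ring, Real.sqrt_mul (by positivity), Real.sqrt_sq (by positivity)]
  congr 2
  field_simp
  ring

theorem bvnDensity_pos (hσ1 : 0 < σ1) (hσ2 : 0 < σ2) (hρ : ρ ^ 2 < 1) (s1 s2 : ℝ) :
    0 < bvnDensity μ1 μ2 σ1 σ2 ρ s1 s2 := by
  rw [bvnDensity_eq_mul hσ1 hσ2 hρ]
  have hρ' : 0 < 1 - ρ ^ 2 := by linarith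
  exact mul_pos (gaussianPDFReal_pos _ _ _ (Real.toNNReal_pos.2 (by positivity)).ne')
    (gaussianPDFReal_pos _ _ _ (Real.toNNReal_pos.2 (by positivity)).ne')

theorem integrable_bvnDensity_fst (hσ1 : 0 < σ1) (hσ2 : 0 < σ2) (hρ : ρ ^ 2 < 1) (s2 : ℝ) :
    Integrable fun s1 => bvnDensity μ1 μ2 σ1 σ2 ρ s1 s2 := by
  simp_rw [bvnDensity_eq_mul hσ1 hσ2 hρ]
  exact (integrable_gaussianPDFReal _ _).const_mul _

theorem setIntegral_Ioi_bvnDensity_le (hσ1 : 0 < σ1) (hσ2 : 0 < σ2) (hρ : ρ ^ 2 < 1) (s2 : ℝ) :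
    ∫ s1 in Ioi (0 : ℝ), bvnDensity μ1 μ2 σ1 σ2 ρ s1 s2 ≤ gaussianPDFReal μ2 (σ2 ^ 2).toNNReal s2 :=
  calc ∫ s1 in Ioi (0 : ℝ), bvnDensity μ1 μ2 σ1 σ2 ρ s1 s2
      ≤ ∫ s1, bvnDensity μ1 μ2 σ1 σ2 ρ s1 s2 :=
        setIntegral_le_integral (integrable_bvnDensity_fst hσ1 hσ2 hρ s2)
          (ae_of_all _ fun s1 => (bvnDensity_pos hσ1 hσ2 hρ s1 s2).le)
    _ = gaussianPDFReal μ2 (σ2 ^ 2).toNNReal s2 := by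
        have hv : (σ1 ^ 2 * (1 - ρ ^ 2)).toNNReal ≠ 0 :=
          (Real.toNNReal_pos.2 (mul_pos (by positivity) (by linarith))).ne'
        simp_rw [bvnDensity_eq_mul hσ1 hσ2 hρ]
        rw [integral_const_mul, integral_gaussianPDFReal_eq_one _ hv, mul_one]

theorem probQ1_pos (hσ1 : 0 < σ1) (hσ2 : 0 < σ2) (hρ : ρ ^ 2 < 1) :
    0 < probQ1 μ1 μ2 σ1 σ2 ρ := by
  have hF_pos (s2 : ℝ) : 0 < ∫ s1 in Ioi (0 : ℝ), bvnDensity μ1 μ2 σ1 σ2 ρ s1 s2 :=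
    setIntegral_pos_of_forall_pos measurableSet_Ioi (by simp)
      (fun s1 _ => bvnDensity_pos hσ1 hσ2 hρ s1 s2)
      (integrable_bvnDensity_fst hσ1 hσ2 hρ s2).integrableOn
  have hF_meas : StronglyMeasurable fun s2 => ∫ s1 in Ioi (0 : ℝ), bvnDensity μ1 μ2 σ1 σ2 ρ s1 s2 :=
    (continuous_bvnDensity.comp continuous_swap).stronglyMeasurable.integral_prod_right'
  refine setIntegral_pos_of_forall_pos measurableSet_Ioi (by simp) (fun s2 _ => hF_pos s2) ?_
  refine (integrable_gaussianPDFReal μ2 (σ2 ^ 2).toNNReal).integrableOn.mono'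
    hF_meas.aestronglyMeasurable (ae_of_all _ fun s2 => ?_)
  rw [norm_of_nonneg (hF_pos s2).le]
  exact setIntegral_Ioi_bvnDensity_le hσ1 hσ2 hρ s2

end BivariateNormal

section QuotientDensity

variable {μ1 μ2 σ1 σ2 ρ : ℝ}

theorem bvnDensity_mul_le (hσ1 : 0 < σ1) (hσ2 : 0 < σ2) (hρ : ρ ^ 2 < 1) (x s : ℝ) :
    bvnDensity μ1 μ2 σ1 σ2 ρ (x * s) s ≤ (√(2 * π * (σ2 ^ 2).toNNReal))⁻¹ *
      gaussianPDFReal (μ1 - ρ * (σ1 / σ2) * μ2) (σ1 ^ 2 * (1 - ρ ^ 2)).toNNReal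
        ((x - ρ * (σ1 / σ2)) * s) := by
  rw [bvnDensity_eq_mul hσ1 hσ2 hρ, sub_mul, gaussianPDFReal_sub,
    show μ1 - ρ * (σ1 / σ2) * μ2 + ρ * (σ1 / σ2) * s = μ1 + ρ * (σ1 / σ2) * (s - μ2) by ring]
  exact mul_le_mul_of_nonneg_right (gaussianPDFReal_le _ _ _) (gaussianPDFReal_nonneg _ _ _)

theorem integrableOn_quotDensQ1_integrand (hσ1 : 0 < σ1) (hσ2 : 0 < σ2) (hρ : ρ ^ 2 < 1)
    {x : ℝ} (hx : ρ * (σ1 / σ2) < x) :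
    IntegrableOn (fun s => s * bvnDensity μ1 μ2 σ1 σ2 ρ (x * s) s) (Ioi 0) := by
  have hmaj := ((integrable_mul_comp_mul_left (integrable_mul_gaussianPDFReal
    (μ1 - ρ * (σ1 / σ2) * μ2) (σ1 ^ 2 * (1 - ρ ^ 2)).toNNReal) (sub_pos.2 hx).ne').const_mul
    (√(2 * π * (σ2 ^ 2).toNNReal))⁻¹).integrableOn (s := Ioi 0)
  refine hmaj.mono' (continuous_id.mul (continuous_bvnDensity.comp
    ((continuous_const.mul continuous_id).prodMk continuous_id))).aestronglyMeasurable
    ((ae_restrict_iff' measurableSet_Ioi).2 (ae_of_all _ fun s hs => ?_))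
  rw [norm_of_nonneg (mul_pos hs (bvnDensity_pos hσ1 hσ2 hρ _ _)).le, mul_left_comm]
  exact mul_le_mul_of_nonneg_left (bvnDensity_mul_le hσ1 hσ2 hρ x s) hs.le

theorem quotDensQ1_le (hσ1 : 0 < σ1) (hσ2 : 0 < σ2) (hρ : ρ ^ 2 < 1) {x : ℝ}
    (hx : ρ * (σ1 / σ2) < x) :
    quotDensQ1 μ1 μ2 σ1 σ2 ρ x ≤ (√(2 * π * (σ2 ^ 2).toNNReal))⁻¹ *
      (((x - ρ * (σ1 / σ2)) ^ 2)⁻¹ * ∫ t in Ioi (0 : ℝ),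
        t * gaussianPDFReal (μ1 - ρ * (σ1 / σ2) * μ2) (σ1 ^ 2 * (1 - ρ ^ 2)).toNNReal t) := by
  rw [← integral_Ioi_mul_comp_mul_left _ (sub_pos.2 hx), ← integral_const_mul]
  refine integral_mono_of_nonneg
    ((ae_restrict_iff' measurableSet_Ioi).2 (ae_of_all _ fun s hs =>
      (mul_pos hs (bvnDensity_pos hσ1 hσ2 hρ _ _)).le))
    ((integrable_mul_comp_mul_left (integrable_mul_gaussianPDFReal _ _)
      (sub_pos.2 hx).ne').const_mul _).integrableOn
    ((ae_restrict_iff' measurableSet_Ioi).2 (ae_of_all _ fun s hs => ?_))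
  dsimp only
  rw [mul_left_comm]
  exact mul_le_mul_of_nonneg_left (bvnDensity_mul_le hσ1 hσ2 hρ x s) hs.le

theorem exists_quotDensQ1_le_rpow (hσ1 : 0 < σ1) (hσ2 : 0 < σ2) (hρ : ρ ^ 2 < 1) :
    ∃ C, ∀ᶠ x in atTop, quotDensQ1 μ1 μ2 σ1 σ2 ρ x ≤ C * x ^ (-2 : ℝ) := by
  set r := ρ * (σ1 / σ2)
  set I := ∫ t in Ioi (0 : ℝ),
    t * gaussianPDFReal (μ1 - r * μ2) (σ1 ^ 2 * (1 - ρ ^ 2)).toNNReal t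
  have hI : 0 ≤ I := setIntegral_nonneg measurableSet_Ioi fun t ht =>
    mul_nonneg (le_of_lt ht) (gaussianPDFReal_nonneg _ _ _)
  refine ⟨4 * ((√(2 * π * (σ2 ^ 2).toNNReal))⁻¹ * I), ?_⟩
  filter_upwards [eventually_gt_atTop 0, eventually_ge_atTop (2 * r)] with x hx0 hxr
  have hsq : ((x - r) ^ 2)⁻¹ ≤ 4 * x ^ (-2 : ℝ) := by
    rw [rpow_neg hx0.le, rpow_two]
    calc ((x - r) ^ 2)⁻¹ ≤ ((x / 2) ^ 2)⁻¹ :=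
          inv_anti₀ (by positivity) (pow_le_pow_left₀ (by positivity) (by linarith) 2)
      _ = 4 * (x ^ 2)⁻¹ := by ring
  calc quotDensQ1 μ1 μ2 σ1 σ2 ρ x ≤ (√(2 * π * (σ2 ^ 2).toNNReal))⁻¹ * (((x - r) ^ 2)⁻¹ * I) :=
        quotDensQ1_le hσ1 hσ2 hρ (by linarith)
    _ ≤ (√(2 * π * (σ2 ^ 2).toNNReal))⁻¹ * (4 * x ^ (-2 : ℝ) * I) := by gcongr
    _ = _ := by ring

theorem exists_rpow_le_quotDensQ1 (hσ1 : 0 < σ1) (hσ2 : 0 < σ2) (hρ : ρ ^ 2 < 1) :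
    ∃ c > 0, ∀ᶠ x in atTop, c * x ^ (-2 : ℝ) ≤ quotDensQ1 μ1 μ2 σ1 σ2 ρ x := by
  obtain ⟨m, hm, hm_le⟩ := (isCompact_Icc.prod isCompact_Icc).exists_forall_le' (a := 0)
    (continuous_bvnDensity (μ1 := μ1) (μ2 := μ2) (σ1 := σ1) (σ2 := σ2) (ρ := ρ)).continuousOn
    (s := Icc (0 : ℝ) 1 ×ˢ Icc (0 : ℝ) 1) fun p _ => bvnDensity_pos hσ1 hσ2 hρ p.1 p.2
  refine ⟨m / 2, by positivity, ?_⟩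
  filter_upwards [eventually_ge_atTop 1, eventually_gt_atTop (ρ * (σ1 / σ2))] with x hx1 hxr
  have hx0 : 0 < x := by linarith
  have hint := integrableOn_quotDensQ1_integrand (μ1 := μ1) (μ2 := μ2) hσ1 hσ2 hρ hxr
  have hpt : ∀ s ∈ Ioc 0 x⁻¹, m * s ≤ s * bvnDensity μ1 μ2 σ1 σ2 ρ (x * s) s := by
    intro s ⟨hs0, hsx⟩
    have hxs : x * s ≤ 1 :=
      (mul_le_mul_of_nonneg_left hsx hx0.le).trans_eq (mul_inv_cancel₀ hx0.ne')
    have hs1 : s ≤ 1 := hsx.trans (inv_le_one_of_one_le₀ hx1)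
    rw [mul_comm]
    exact mul_le_mul_of_nonneg_left (hm_le (x * s, s) ⟨⟨by positivity, hxs⟩, hs0.le, hs1⟩) hs0.le
  calc m / 2 * x ^ (-2 : ℝ) = ∫ s in Ioc 0 x⁻¹, m * s := by
        rw [integral_const_mul, ← intervalIntegral.integral_of_le (inv_pos.2 hx0).le, integral_id,
          rpow_neg hx0.le, rpow_two, inv_pow]
        ring
    _ ≤ ∫ s in Ioc 0 x⁻¹, s * bvnDensity μ1 μ2 σ1 σ2 ρ (x * s) s :=
        setIntegral_mono_on ((continuous_const.mul continuous_id).integrableOn_Icc.mono_set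
          Ioc_subset_Icc_self) (hint.mono_set Ioc_subset_Ioi_self) measurableSet_Ioc hpt
    _ ≤ quotDensQ1 μ1 μ2 σ1 σ2 ρ x :=
        setIntegral_mono_set hint ((ae_restrict_iff' measurableSet_Ioi).2 (ae_of_all _
          fun s hs => (mul_pos hs (bvnDensity_pos hσ1 hσ2 hρ _ _)).le))
          Ioc_subset_Ioi_self.eventuallyLE

end QuotientDensity

theorem log_conditional_density_tendsto_neg_two
    (μ1 μ2 σ1 σ2 ρ : ℝ) (hσ1 : 0 < σ1) (hσ2 : 0 < σ2)
    (hρ : ρ ∈ Set.Ioo (-1 : ℝ) 1) :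
    Filter.Tendsto
      (fun x : ℝ =>
        Real.log (quotDensQ1 μ1 μ2 σ1 σ2 ρ x / probQ1 μ1 μ2 σ1 σ2 ρ) / Real.log x)
      Filter.atTop (nhds (-2)) := by
  have hρ2 : ρ ^ 2 < 1 := by nlinarith [hρ.1, hρ.2]
  have hP := probQ1_pos (μ1 := μ1) (μ2 := μ2) hσ1 hσ2 hρ2
  obtain ⟨c, hc, hlow⟩ := exists_rpow_le_quotDensQ1 (μ1 := μ1) (μ2 := μ2) hσ1 hσ2 hρ2
  obtain ⟨C, hup⟩ := exists_quotDensQ1_le_rpow (μ1 := μ1) (μ2 := μ2) hσ1 hσ2 hρ2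
  refine tendsto_log_div_log_of_rpow_bounds (c₂ := C / probQ1 μ1 μ2 σ1 σ2 ρ) (div_pos hc hP)
    ?_ ?_
  · filter_upwards [hlow] with x hx
    rw [div_mul_eq_mul_div]
    exact div_le_div_of_nonneg_right hx hP.le
  · filter_upwards [hup] with x hx
    rw [div_mul_eq_mul_div]
    exact div_le_div_of_nonneg_right hx hP.le
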